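/- For every integer n ≥ 3, the digraph Γ(n,2) is strongly connected with diameter 2, and dim(Γ(n,2)) = f(n,2). -/

import Mathlib

/-!  Common definitions for weak metric dimension of digraphs.

A digraph is modelled by a vertex type `V` together with an arc relation
`A : V → V → Prop` (simplicity is expressed by `Irreflexive A`). -/

/-- There is a directed walk of length `n` from `x` to `y`. -/
def walkLen {V : Type*} (A : V → V → Prop) : ℕ → V → V → Prop
  | 0 => fun x y => x = y
  | n + 1 => fun x y => ∃ z, A x z ∧ walkLen A n z y

/-- `∂(x,y)`: the length of a shortest directed path from `x` to `y`. -/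
noncomputable def ddist {V : Type*} (A : V → V → Prop) (x y : V) : ℕ :=
  sInf {n | walkLen A n x y}

/-- The two way distance `∂̃(x,y) = (∂(x,y), ∂(y,x))`. -/
noncomputable def twoDist {V : Type*} (A : V → V → Prop) (x y : V) : ℕ × ℕ :=
  (ddist A x y, ddist A y x)

/-- Strong connectivity: any vertex can be reached from any vertex by a directed walk. -/
def IsStronglyConnected {V : Type*} (A : V → V → Prop) : Prop :=
  ∀ x y : V, ∃ n, walkLen A n x y

/-- `S` is a weakly resolving set: distinct vertices have different tuples of
two way distances from the vertices of `S`. -/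
def IsWeaklyResolving {V : Type*} (A : V → V → Prop) (S : Set V) : Prop :=
  ∀ u v : V, (∀ w ∈ S, twoDist A w u = twoDist A w v) → u = v

/-- The weak metric dimension: minimum cardinality of a weakly resolving set. -/
noncomputable def wdim {V : Type*} [Fintype V] (A : V → V → Prop) : ℕ :=
  sInf {k | ∃ S : Finset V, S.card = k ∧ IsWeaklyResolving A ↑S}

/-- The diameter: the maximum of `∂(x,y)` over all ordered pairs of vertices. -/
noncomputable def diam {V : Type*} [Fintype V] (A : V → V → Prop) : ℕ :=
  sSup {m | ∃ x y : V, ddist A x y = m}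

/-- `f(n,d)`: the least positive integer `k` with `k + d^(2k) ≥ n`. -/
noncomputable def fnd (n d : ℕ) : ℕ :=
  sInf {k | 0 < k ∧ n ≤ k + d ^ (2 * k)}

/-- An isomorphism from `(V, A)` onto `(W, B)` exists. -/
def IsIsoTo {V W : Type*} (A : V → V → Prop) (B : W → W → Prop) : Prop :=
  ∃ e : V ≃ W, ∀ x y, A x y ↔ B (e x) (e y)

/-- The digraph of Example 2.3: vertices `v_1, …, v_n` are the elements
`0, …, n-1` of `Fin n` (so `v_i` is `i - 1`). -/
def egArc (n d : ℕ) : Fin n → Fin n → Prop := fun x y =>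
  (x.val = n - 1 ∧ y.val ≤ n - d) ∨
  (x.val ≤ n - d ∧ y.val = n - d + 1) ∨
  (n - d + 1 ≤ x.val ∧ x.val ≤ n - 2 ∧ y.val = x.val + 1)

/-- The `r`-th (0-based) coordinate of the tuple `v_{j+1}` in Construction 2.4;
it lies in `{1, …, d}` and `j = Σ_r (coord r - 1) d^r`. -/
def gcoord (d j r : ℕ) : ℕ := j / d ^ r % d + 1

/-- The arc relation of Construction 2.4, with the `u`-vertices `Fin k` on the left
and the `v`-vertices `Fin m` on the right of the sum. -/
def gammaArcKM (d k : ℕ) {m : ℕ} : Fin k ⊕ Fin m → Fin k ⊕ Fin m → Prop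
  | .inl _, .inl _ => False
  | .inl i, .inr j => gcoord d j.val (2 * i.val) = 1
  | .inr j, .inl i => gcoord d j.val (2 * i.val + 1) = 1
  | .inr j, .inr l => j ≠ l ∧ ∀ r < k,
      gcoord d l.val (2 * r) ≤ gcoord d j.val (2 * r) + 1 ∧
      gcoord d j.val (2 * r + 1) ≤ gcoord d l.val (2 * r + 1) + 1

/-- The arc relation of `Γ̄`: `Γ` of Construction 2.4 together with symmetric arcs
between any two distinct `u`-vertices. -/
def gammaBarArcKM (d k : ℕ) {m : ℕ} : Fin k ⊕ Fin m → Fin k ⊕ Fin m → Prop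
  | .inl i, .inl i' => i ≠ i'
  | x, y => gammaArcKM d k x y

/-- The directed cycle of length `m` on `Fin m`. -/
def cycArc (m : ℕ) [NeZero m] : Fin m → Fin m → Prop := fun x y => y = x + 1

/-- `σ` is an automorphism of the digraph `(V, A)`. -/
def IsDigraphAuto {V : Type*} (A : V → V → Prop) (σ : V ≃ V) : Prop :=
  ∀ a b, A a b ↔ A (σ a) (σ b)

/-- Vertex-transitivity. -/
def IsVertexTransitive {V : Type*} (A : V → V → Prop) : Prop :=
  ∀ x y : V, ∃ σ : V ≃ V, IsDigraphAuto A σ ∧ σ x = y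

/-- Weak distance-transitivity. -/
def IsWeaklyDistanceTransitive {V : Type*} (A : V → V → Prop) : Prop :=
  ∀ x y x' y' : V, twoDist A x y = twoDist A x' y' →
    ∃ σ : V ≃ V, IsDigraphAuto A σ ∧ σ x = x' ∧ σ y = y'

/-- Weak distance-regularity. -/
noncomputable def IsWeaklyDistanceRegular {V : Type*} (A : V → V → Prop) : Prop :=
  ∀ i j : ℕ × ℕ, (∃ a b : V, twoDist A a b = i) → (∃ a b : V, twoDist A a b = j) →
    ∀ x y x' y' : V, twoDist A x y = twoDist A x' y' →
      Set.ncard {z : V | twoDist A x z = i ∧ twoDist A z y = j} =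
      Set.ncard {z : V | twoDist A x' z = i ∧ twoDist A z y' = j}

/-- The complete digraph `K_t`. -/
def Krel (t : ℕ) : Fin t → Fin t → Prop := fun x y => x ≠ y

/-- The null digraph `K̄_t`. -/
def Nrel (t : ℕ) : Fin t → Fin t → Prop := fun _ _ => False

/-- The directed path `P_2` of length `1`. -/
def P2rel : Fin 2 → Fin 2 → Prop := fun x y => x = 0 ∧ y = 1

/-- The digraph `G_1` on `{0,1,2}` with arcs `(0,1),(1,2),(2,1),(2,0)`. -/
def G1rel : Fin 3 → Fin 3 → Prop := fun x y =>
  (x = 0 ∧ y = 1) ∨ (x = 1 ∧ y = 2) ∨ (x = 2 ∧ y = 1) ∨ (x = 2 ∧ y = 0)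

/-- The digraph `G_2` on `{0,1,2}` with arcs `(0,1),(1,0),(1,2),(2,1),(2,0)`. -/
def G2rel : Fin 3 → Fin 3 → Prop := fun x y =>
  (x = 0 ∧ y = 1) ∨ (x = 1 ∧ y = 0) ∨ (x = 1 ∧ y = 2) ∨ (x = 2 ∧ y = 1) ∨ (x = 2 ∧ y = 0)

/-- The generalized lexicographic product `G[H₀, H₁, H₂]` for a digraph `G` on `{0,1,2}`. -/
def glex3 {α β γ : Type*} (G : Fin 3 → Fin 3 → Prop)
    (H0 : α → α → Prop) (H1 : β → β → Prop) (H2 : γ → γ → Prop) :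
    α ⊕ β ⊕ γ → α ⊕ β ⊕ γ → Prop
  | .inl x, .inl y => H0 x y
  | .inl _, .inr (.inl _) => G 0 1
  | .inl _, .inr (.inr _) => G 0 2
  | .inr (.inl _), .inl _ => G 1 0
  | .inr (.inl x), .inr (.inl y) => H1 x y
  | .inr (.inl _), .inr (.inr _) => G 1 2
  | .inr (.inr _), .inl _ => G 2 0
  | .inr (.inr _), .inr (.inl _) => G 2 1
  | .inr (.inr x), .inr (.inr y) => H2 x y

/-- A clique in a digraph: the two way distance between any two distinct
vertices of `S` is `(1,1)`. -/
noncomputable def DClique {V : Type*} (A : V → V → Prop) (S : Set V) : Prop :=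
  ∀ u ∈ S, ∀ v ∈ S, u ≠ v → twoDist A u v = (1, 1)

/-- An independent set in a digraph: no arcs inside `R`. -/
def DIndependent {V : Type*} (A : V → V → Prop) (R : Set V) : Prop :=
  ∀ u ∈ R, ∀ v ∈ R, ¬ A u v

/-! For `d = 2` the `v`-vertices form a complete digraph, and every vertex other than
`v_1 = (1, …, 1)` has arcs to and from `v_1`; so `Γ(n,2)` is strongly connected of diameter at
most `2`, and `∂(u_i, v_j)`, `∂(v_j, u_i)` are the coordinates `2i - 1` and `2i` of `v_j`.
Hence `{u_1, …, u_k}` is weakly resolving. Conversely, in any strongly connected digraph of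
diameter at most `D`, a weakly resolving set `S` gives the vertices outside `S` distinct tuples
in `{1, …, D}^(2|S|)`, so `|V| ≤ |S| + D^(2|S|)`, and minimality of `f` gives `|S| ≥ f(|V|, D)`. -/

section

variable {V : Type*} {A : V → V → Prop} {x y : V}

lemma walkLen_one : walkLen A 1 x y ↔ A x y := by
  simp [walkLen]

lemma ddist_le {n : ℕ} (h : walkLen A n x y) : ddist A x y ≤ n := Nat.sInf_le h

lemma walkLen_ddist (hA : IsStronglyConnected A) (x y : V) : walkLen A (ddist A x y) x y :=
  Nat.sInf_mem (hA x y)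

lemma ddist_eq_zero_iff (hA : IsStronglyConnected A) : ddist A x y = 0 ↔ x = y := by
  refine ⟨fun h => ?_, fun h => Nat.le_zero.1 (ddist_le (n := 0) h)⟩
  simpa [h, walkLen] using walkLen_ddist hA x y

lemma eq_of_ddist_self_eq {w v : V} (hA : IsStronglyConnected A) (h : ddist A w w = ddist A w v) :
    w = v :=
  (ddist_eq_zero_iff hA).1 (h.symm.trans ((ddist_eq_zero_iff hA).2 rfl))

lemma one_le_ddist (hA : IsStronglyConnected A) (hxy : x ≠ y) : 1 ≤ ddist A x y :=
  Nat.one_le_iff_ne_zero.2 (mt (ddist_eq_zero_iff hA).1 hxy)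

lemma ddist_eq_one (hxy : x ≠ y) (h : A x y) : ddist A x y = 1 := by
  refine le_antisymm (ddist_le (walkLen_one.2 h)) (Nat.one_le_iff_ne_zero.2 fun h0 => ?_)
  rcases Nat.sInf_eq_zero.1 h0 with h0 | h0
  · exact hxy h0
  · exact Set.eq_empty_iff_forall_notMem.1 h0 1 (walkLen_one.2 h)

lemma ddist_eq_two (hA : IsStronglyConnected A) (h2 : ∀ x y, ddist A x y ≤ 2) (hxy : x ≠ y)
    (h : ¬ A x y) : ddist A x y = 2 := by
  have h1 : ddist A x y ≠ 1 := fun h1 => h (walkLen_one.1 (h1 ▸ walkLen_ddist hA x y))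
  have := one_le_ddist hA hxy
  have := h2 x y
  omega

lemma exists_walkLen_le_two_of_hub (c : V) (hin : ∀ x ≠ c, A x c) (hout : ∀ y ≠ c, A c y)
    (x y : V) : ∃ n ≤ 2, walkLen A n x y := by
  by_cases hxy : x = y
  · exact ⟨0, by omega, hxy⟩
  by_cases hx : x = c
  · exact ⟨1, by omega, walkLen_one.2 (hx ▸ hout y (hx ▸ Ne.symm hxy))⟩
  by_cases hy : y = c
  · exact ⟨1, by omega, walkLen_one.2 (hy ▸ hin x (hy ▸ hxy))⟩
  exact ⟨2, le_rfl, c, hin x hx, y, hout y hy, rfl⟩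

lemma diam_eq_of_ddist_le {D : ℕ} [Fintype V] (hle : ∀ x y, ddist A x y ≤ D)
    (h : ddist A x y = D) : diam A = D :=
  IsGreatest.csSup_eq ⟨⟨x, y, h⟩, by rintro _ ⟨a, b, rfl⟩; exact hle a b⟩

lemma wdim_eq_card_of_isWeaklyResolving [Fintype V] {S : Finset V}
    (hS : IsWeaklyResolving A ↑S)
    (hmin : ∀ T : Finset V, IsWeaklyResolving A ↑T → S.card ≤ T.card) : wdim A = S.card :=
  le_antisymm (Nat.sInf_le ⟨S, rfl, hS⟩) (le_csInf ⟨_, S, rfl, hS⟩ fun _ ⟨T, hT, hres⟩ =>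
    hT ▸ hmin T hres)

theorem card_le_card_add_pow_of_isWeaklyResolving [Fintype V] {D : ℕ}
    (hA : IsStronglyConnected A) (hD : ∀ x y, ddist A x y ≤ D) {S : Finset V}
    (hS : IsWeaklyResolving A ↑S) : Fintype.card V ≤ S.card + D ^ (2 * S.card) := by
  classical
  let signature : V → S → ℕ × ℕ := fun x w => twoDist A w x
  have hmaps : ∀ x ∈ Sᶜ, signature x ∈
      Fintype.piFinset fun _ : S => Finset.Icc 1 D ×ˢ Finset.Icc 1 D := by
    intro x hx
    simp only [Fintype.mem_piFinset, Finset.mem_product, Finset.mem_Icc]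
    intro w
    have hwx : (w : V) ≠ x := fun h => Finset.mem_compl.1 hx (h ▸ w.2)
    exact ⟨⟨one_le_ddist hA hwx, hD _ _⟩, one_le_ddist hA hwx.symm, hD _ _⟩
  have hinj : Set.InjOn signature ↑Sᶜ := fun u _ v _ huv =>
    hS u v fun w hw => congrFun huv ⟨w, hw⟩
  have hcard := Finset.card_le_card_of_injOn signature hmaps hinj
  rw [Finset.card_compl, Fintype.card_piFinset, Finset.prod_const, Finset.card_product,
    Nat.card_Icc, Nat.add_sub_cancel, Finset.card_univ, Fintype.card_coe, ← pow_two,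
    ← pow_mul] at hcard
  have := S.card_le_univ
  omega

theorem fnd_le_card_of_isWeaklyResolving [Fintype V] {D : ℕ} (hA : IsStronglyConnected A)
    (hD : ∀ x y, ddist A x y ≤ D) (hV : 2 ≤ Fintype.card V) {S : Finset V}
    (hS : IsWeaklyResolving A ↑S) : fnd (Fintype.card V) D ≤ S.card := by
  have h := card_le_card_add_pow_of_isWeaklyResolving hA hD hS
  refine Nat.sInf_le ⟨Nat.pos_of_ne_zero fun h0 => ?_, h⟩
  rw [h0, mul_zero, pow_zero] at h
  omega

end

lemma fnd_spec {n : ℕ} (d : ℕ) (hn : 0 < n) : 0 < fnd n d ∧ n ≤ fnd n d + d ^ (2 * fnd n d) :=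
  Nat.sInf_mem (s := {k | 0 < k ∧ n ≤ k + d ^ (2 * k)}) ⟨n, hn, Nat.le_add_right _ _⟩

lemma fnd_le {n d j : ℕ} (hj : 0 < j) (h : n ≤ j + d ^ (2 * j)) : fnd n d ≤ j :=
  Nat.sInf_le (s := {k | 0 < k ∧ n ≤ k + d ^ (2 * k)}) ⟨hj, h⟩

lemma fnd_two_add_two_le {n : ℕ} (hn : 3 ≤ n) : fnd n 2 + 2 ≤ n := by
  obtain ⟨hk, -⟩ := fnd_spec 2 (by omega : 0 < n)
  by_contra! h
  have hk2 : 2 ≤ fnd n 2 := by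
    by_contra! hk1
    omega
  have h4 : 2 ^ 2 ≤ 2 ^ (2 * (fnd n 2 - 1)) := Nat.pow_le_pow_right (by norm_num) (by omega)
  have := fnd_le (d := 2) (by omega : 0 < fnd n 2 - 1) (by omega : n ≤ _)
  omega

lemma gcoord_zero (d r : ℕ) : gcoord d 0 r = 1 := by simp [gcoord]

lemma gcoord_two_eq_one_or_two (j r : ℕ) : gcoord 2 j r = 1 ∨ gcoord 2 j r = 2 := by
  have := Nat.mod_two_eq_zero_or_one (j / 2 ^ r)
  unfold gcoord
  omega

lemma gcoord_succ (d j r : ℕ) : gcoord d j (r + 1) = gcoord d (j / d) r := by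
  rw [gcoord, gcoord, pow_succ', Nat.div_div_eq_div_mul]

lemma eq_of_gcoord_eq {d L a b : ℕ} (ha : a < d ^ L) (hb : b < d ^ L)
    (h : ∀ r < L, gcoord d a r = gcoord d b r) : a = b := by
  induction L generalizing a b with
  | zero =>
    rw [pow_zero, Nat.lt_one_iff] at ha hb
    rw [ha, hb]
  | succ L ih =>
    have hd : 0 < d := Nat.pos_of_ne_zero fun hd => by simp [hd] at ha
    have hdiv : a / d = b / d := by
      refine ih ?_ ?_ fun r hr => by rw [← gcoord_succ, ← gcoord_succ]; exact h (r + 1) (by omega)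
      · exact (Nat.div_lt_iff_lt_mul hd).2 (pow_succ d L ▸ ha)
      · exact (Nat.div_lt_iff_lt_mul hd).2 (pow_succ d L ▸ hb)
    have hmod : a % d = b % d := by simpa [gcoord] using h 0 (by omega)
    rw [← Nat.div_add_mod a d, ← Nat.div_add_mod b d, hdiv, hmod]

section GammaTwo

variable {k m : ℕ}

local notation "Γ" => gammaArcKM 2 k (m := m)

lemma gammaArcKM_two_inr_inr {j l : Fin m} : Γ (.inr j) (.inr l) ↔ j ≠ l := by
  refine ⟨And.left, fun h => ⟨h, fun r _ => ?_⟩⟩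
  have := gcoord_two_eq_one_or_two j (2 * r)
  have := gcoord_two_eq_one_or_two l (2 * r)
  have := gcoord_two_eq_one_or_two j (2 * r + 1)
  have := gcoord_two_eq_one_or_two l (2 * r + 1)
  omega

section Hub

variable (hm : 0 < m)
include hm

lemma exists_walkLen_gammaArcKM_two_le_two (x y : Fin k ⊕ Fin m) :
    ∃ n ≤ 2, walkLen Γ n x y := by
  refine exists_walkLen_le_two_of_hub (.inr ⟨0, hm⟩) (fun x hx => ?_) (fun y hy => ?_) x y
  · match x with
    | .inl _ => exact gcoord_zero _ _
    | .inr j => exact gammaArcKM_two_inr_inr.2 fun h => hx (h ▸ rfl)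
  · match y with
    | .inl _ => exact gcoord_zero _ _
    | .inr j => exact gammaArcKM_two_inr_inr.2 fun h => hy (h ▸ rfl)

lemma isStronglyConnected_gammaArcKM_two : IsStronglyConnected Γ := fun x y =>
  let ⟨n, _, h⟩ := exists_walkLen_gammaArcKM_two_le_two hm x y
  ⟨n, h⟩

lemma ddist_gammaArcKM_two_le (x y : Fin k ⊕ Fin m) : ddist Γ x y ≤ 2 :=
  let ⟨_, hn, h⟩ := exists_walkLen_gammaArcKM_two_le_two hm x y
  (ddist_le h).trans hn

lemma ddist_gammaArcKM_two_inl_inr (i : Fin k) (j : Fin m) :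
    ddist Γ (.inl i) (.inr j) = gcoord 2 j (2 * i) := by
  rcases gcoord_two_eq_one_or_two j (2 * i) with h | h <;> rw [h]
  · exact ddist_eq_one Sum.inl_ne_inr h
  · exact ddist_eq_two (isStronglyConnected_gammaArcKM_two hm) (ddist_gammaArcKM_two_le hm)
      Sum.inl_ne_inr fun h' => absurd (h.symm.trans h') (by norm_num)

lemma ddist_gammaArcKM_two_inr_inl (i : Fin k) (j : Fin m) :
    ddist Γ (.inr j) (.inl i) = gcoord 2 j (2 * i + 1) := by
  rcases gcoord_two_eq_one_or_two j (2 * i + 1) with h | h <;> rw [h]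
  · exact ddist_eq_one Sum.inr_ne_inl h
  · exact ddist_eq_two (isStronglyConnected_gammaArcKM_two hm) (ddist_gammaArcKM_two_le hm)
      Sum.inr_ne_inl fun h' => absurd (h.symm.trans h') (by norm_num)

lemma isWeaklyResolving_gammaArcKM_two_inl (hmk : m ≤ 2 ^ (2 * k)) :
    IsWeaklyResolving Γ ↑(Finset.univ.map (Function.Embedding.inl : Fin k ↪ Fin k ⊕ Fin m)) := by
  have hA := isStronglyConnected_gammaArcKM_two (k := k) hm
  intro u v h
  replace h : ∀ i, twoDist Γ (.inl i) u = twoDist Γ (.inl i) v := fun i => h _ (by simp)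
  match u, v with
  | .inl i, _ => exact eq_of_ddist_self_eq hA (congrArg Prod.fst (h i))
  | _, .inl i => exact (eq_of_ddist_self_eq hA (congrArg Prod.fst (h i).symm)).symm
  | .inr j, .inr l =>
    refine congrArg Sum.inr <| Fin.ext <|
      eq_of_gcoord_eq (j.2.trans_le hmk) (l.2.trans_le hmk) fun r hr => ?_
    obtain ⟨i, rfl | rfl⟩ := Nat.even_or_odd' r
    · simpa [twoDist, ddist_gammaArcKM_two_inl_inr hm] using congrArg Prod.fst (h ⟨i, by omega⟩)
    · simpa [twoDist, ddist_gammaArcKM_two_inr_inl hm] using congrArg Prod.snd (h ⟨i, by omega⟩)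

end Hub

lemma diam_gammaArcKM_two (hk : 0 < k) (hm : 1 < m) : diam Γ = 2 :=
  diam_eq_of_ddist_le (ddist_gammaArcKM_two_le (by omega)) (x := .inl ⟨0, hk⟩)
    (y := .inr ⟨1, hm⟩) (by rw [ddist_gammaArcKM_two_inl_inr (by omega)]; simp [gcoord])

end GammaTwo

/-- Lemma 2.5(ii). For `n ≥ 3`, the digraph `Γ(n,2)` is strongly
connected with diameter `2` and `dim(Γ(n,2)) = f(n,2)`. -/
theorem gamma_n2_dim (n : ℕ) (hn : 3 ≤ n) :
    IsStronglyConnected (gammaArcKM 2 (fnd n 2) (m := n - fnd n 2)) ∧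
    diam (gammaArcKM 2 (fnd n 2) (m := n - fnd n 2)) = 2 ∧
    wdim (gammaArcKM 2 (fnd n 2) (m := n - fnd n 2)) = fnd n 2 := by
  obtain ⟨hk, hnk⟩ := fnd_spec 2 (by omega : 0 < n)
  have hm := fnd_two_add_two_le hn
  have hm0 : 0 < n - fnd n 2 := by omega
  have hA := isStronglyConnected_gammaArcKM_two (k := fnd n 2) hm0
  refine ⟨hA, diam_gammaArcKM_two hk (by omega), ?_⟩
  have hU := isWeaklyResolving_gammaArcKM_two_inl (k := fnd n 2) hm0 (by omega)
  have hcard : Fintype.card (Fin (fnd n 2) ⊕ Fin (n - fnd n 2)) = n := by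
    rw [Fintype.card_sum, Fintype.card_fin, Fintype.card_fin]
    omega
  rw [wdim_eq_card_of_isWeaklyResolving hU fun T hT => ?_, Finset.card_map, Finset.card_univ,
    Fintype.card_fin]
  simpa [hcard] using
    fnd_le_card_of_isWeaklyResolving hA (ddist_gammaArcKM_two_le hm0) (by omega) hT
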